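/- For any two distinct density matrices ρ₁, ρ₂, the optimal 1 → n virtual cloning cost η satisfies the lower bound η ≥ ‖p₁ρ₁^{⊗n} − p₂ρ₂^{⊗n}‖₁ / ‖p₁ρ₁ − p₂ρ₂‖₁ for every probability distribution (p₁, p₂), provided p₁ρ₁ ≠ p₂ρ₂. -/

import Mathlib

open Matrix Kronecker BigOperators
open scoped ComplexOrder

noncomputable def traceNorm {ι : Type*} [Fintype ι] [DecidableEq ι] (A : Matrix ι ι ℂ) : ℝ :=
  ((let hA := (Matrix.posSemidef_conjTranspose_mul_self A).isHermitian
    (hA.eigenvectorUnitary : Matrix ι ι ℂ) * diagonal (fun i => ((Real.sqrt (hA.eigenvalues i) : ℝ) : ℂ)) *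
      (star hA.eigenvectorUnitary : Matrix ι ι ℂ)).trace).re

def IsDensity {ι : Type*} [Fintype ι] [DecidableEq ι] (ρ : Matrix ι ι ℂ) : Prop :=
  ρ.PosSemidef ∧ ρ.trace = 1

noncomputable def kronPow {ι : Type*} [Fintype ι] (A : Matrix ι ι ℂ) (k : ℕ) :
    Matrix (Fin k → ι) (Fin k → ι) ℂ :=
  Matrix.of fun x y => ∏ i, A (x i) (y i)

def choiMatrix {ι κ : Type*} [Fintype ι] [DecidableEq ι] [Fintype κ]
    (Λ : Matrix ι ι ℂ →ₗ[ℂ] Matrix κ κ ℂ) : Matrix (ι × κ) (ι × κ) ℂ :=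
  Matrix.of fun p q => Λ (Matrix.single p.1 q.1 1) p.2 q.2

def IsCPTP {ι κ : Type*} [Fintype ι] [DecidableEq ι] [Fintype κ]
    (Λ : Matrix ι ι ℂ →ₗ[ℂ] Matrix κ κ ℂ) : Prop :=
  (choiMatrix Λ).PosSemidef ∧ ∀ A, (Λ A).trace = A.trace

def IsHPTP {ι κ : Type*} [Fintype ι] [Fintype κ]
    (Λ : Matrix ι ι ℂ →ₗ[ℂ] Matrix κ κ ℂ) : Prop :=
  (∀ A, A.IsHermitian → (Λ A).IsHermitian) ∧ ∀ A, (Λ A).trace = A.trace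

noncomputable def proj {ι : Type*} (ψ : ι → ℂ) : Matrix ι ι ℂ := Matrix.vecMulVec ψ (star ψ)

noncomputable def overlap {ι : Type*} [Fintype ι] (ψ φ : ι → ℂ) : ℂ := ∑ i, (starRingEnd ℂ) (ψ i) * φ i

noncomputable def cloneCostSet {d m : ℕ} (ρ : Fin m → Matrix (Fin d) (Fin d) ℂ) (n : ℕ) : Set ℝ :=
  {c | ∃ (Λp Λm : Matrix (Fin d) (Fin d) ℂ →ₗ[ℂ] Matrix (Fin n → Fin d) (Fin n → Fin d) ℂ)
      (lp lm : ℝ), IsCPTP Λp ∧ IsCPTP Λm ∧ 0 ≤ lp ∧ 0 ≤ lm ∧ lp - lm = 1 ∧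
      (∀ i, (lp : ℂ) • Λp (ρ i) - (lm : ℂ) • Λm (ρ i) = kronPow (ρ i) n) ∧ c = lp + lm}

open Matrix
open scoped ComplexOrder
variable {ι : Type*} [Fintype ι] [DecidableEq ι]

noncomputable def mcfc {A : Matrix ι ι ℂ} (hA : A.IsHermitian) (f : ℝ → ℝ) : Matrix ι ι ℂ :=
  (hA.eigenvectorUnitary : Matrix ι ι ℂ) * diagonal ((↑) ∘ f ∘ hA.eigenvalues) *
    star (hA.eigenvectorUnitary : Matrix ι ι ℂ)

lemma mcfc_congr {A : Matrix ι ι ℂ} (hA : A.IsHermitian) {f g : ℝ → ℝ}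
    (h : ∀ x, f x = g x) : mcfc hA f = mcfc hA g := by
  have : f = g := funext h
  rw [this]

lemma mcfc_id {A : Matrix ι ι ℂ} (hA : A.IsHermitian) : mcfc hA id = A := by
  rw [mcfc]; exact_mod_cast hA.spectral_theorem.symm

lemma mcfc_const {A : Matrix ι ι ℂ} (hA : A.IsHermitian) (c : ℝ) :
    mcfc hA (fun _ => c) = (c : ℝ) • (1 : Matrix ι ι ℂ) := by
  have hU := (Matrix.mem_unitaryGroup_iff).mp hA.eigenvectorUnitary.2
  rw [mcfc]
  have : (diagonal ((↑) ∘ (fun _ => c) ∘ hA.eigenvalues) : Matrix ι ι ℂ) = (c:ℝ) • 1 := by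
    ext i j; by_cases h : i = j <;> simp [diagonal, h, Complex.real_smul]
  rw [this, mul_smul_comm, mul_one, smul_mul_assoc, hU]

lemma mcfc_add {A : Matrix ι ι ℂ} (hA : A.IsHermitian) (f g : ℝ → ℝ) :
    mcfc hA f + mcfc hA g = mcfc hA (f + g) := by
  have h : (diagonal ((↑) ∘ (f + g) ∘ hA.eigenvalues) : Matrix ι ι ℂ)
      = diagonal ((↑) ∘ f ∘ hA.eigenvalues) + diagonal ((↑) ∘ g ∘ hA.eigenvalues) := by
    ext i j; by_cases hij : i = j <;> simp [diagonal, hij]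
  rw [mcfc, mcfc, mcfc, h, Matrix.mul_add, Matrix.add_mul]

lemma mcfc_mul {A : Matrix ι ι ℂ} (hA : A.IsHermitian) (f g : ℝ → ℝ) :
    mcfc hA f * mcfc hA g = mcfc hA (f * g) := by
  have hU := (Matrix.mem_unitaryGroup_iff').mp hA.eigenvectorUnitary.2
  set U := (hA.eigenvectorUnitary : Matrix ι ι ℂ) with hUdef
  show U * diagonal _ * star U * (U * diagonal _ * star U) = U * diagonal _ * star U
  rw [mul_assoc (U * diagonal _) (star U), ← mul_assoc (star U) (U * diagonal _),
    ← mul_assoc (star U) U, hU, one_mul, ← mul_assoc, mul_assoc U,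
    diagonal_mul_diagonal]
  have hd : (fun i => ((↑) ∘ f ∘ hA.eigenvalues : ι → ℂ) i * ((↑) ∘ g ∘ hA.eigenvalues : ι → ℂ) i)
      = ((↑) ∘ (f * g) ∘ hA.eigenvalues : ι → ℂ) := by funext i; simp
  rw [hd]

lemma mcfc_posSemidef {A : Matrix ι ι ℂ} (hA : A.IsHermitian) {f : ℝ → ℝ}
    (hf : ∀ x, 0 ≤ f x) : (mcfc hA f).PosSemidef := by
  rw [mcfc, Matrix.star_eq_conjTranspose]
  exact (Matrix.PosSemidef.diagonal (fun i => by
    simpa using Complex.zero_le_real.mpr (hf _))).mul_mul_conjTranspose_same _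

lemma mcfc_eq_pos_sub_neg {A : Matrix ι ι ℂ} (hA : A.IsHermitian) (f : ℝ → ℝ) :
    mcfc hA f = mcfc hA (fun x => max (f x) 0) - mcfc hA (fun x => max (-f x) 0) := by
  rw [eq_sub_iff_add_eq, mcfc_add]
  apply mcfc_congr
  intro x
  rcases le_total (f x) 0 with h | h
  · simp [max_eq_right h, max_eq_left (neg_nonneg.mpr h)]
  · simp [max_eq_left h, max_eq_right (neg_nonpos.mpr h)]

lemma mcfc_isHermitian {A : Matrix ι ι ℂ} (hA : A.IsHermitian) (f : ℝ → ℝ) :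
    (mcfc hA f).IsHermitian := by
  rw [mcfc_eq_pos_sub_neg]
  exact ((mcfc_posSemidef hA fun x => le_max_right _ _).isHermitian).sub
    ((mcfc_posSemidef hA fun x => le_max_right _ _).isHermitian)

lemma mcfc_trace {A : Matrix ι ι ℂ} (hA : A.IsHermitian) (f : ℝ → ℝ) :
    (mcfc hA f).trace = ((∑ i, f (hA.eigenvalues i) : ℝ) : ℂ) := by
  have hU := (Matrix.mem_unitaryGroup_iff').mp hA.eigenvectorUnitary.2
  rw [mcfc, Matrix.trace_mul_comm, ← mul_assoc, hU, one_mul, Matrix.trace_diagonal]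
  push_cast; rfl

noncomputable def Matrix.PosSemidef.sqrt {A : Matrix ι ι ℂ} (hA : A.PosSemidef) : Matrix ι ι ℂ :=
  mcfc hA.isHermitian Real.sqrt

lemma Matrix.PosSemidef.posSemidef_sqrt {A : Matrix ι ι ℂ} (hA : A.PosSemidef) :
    hA.sqrt.PosSemidef :=
  mcfc_posSemidef _ Real.sqrt_nonneg

lemma Matrix.PosSemidef.sqrt_mul_self {A : Matrix ι ι ℂ} (hA : A.PosSemidef) :
    hA.sqrt * hA.sqrt = A := by
  have this : ((↑) ∘ (Real.sqrt * Real.sqrt) ∘ hA.isHermitian.eigenvalues : ι → ℂ)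
      = (↑) ∘ id ∘ hA.isHermitian.eigenvalues := by
    funext i; simp [Real.mul_self_sqrt (hA.eigenvalues_nonneg i)]
  rw [Matrix.PosSemidef.sqrt, mcfc_mul]
  refine Eq.trans ?_ (mcfc_id hA.isHermitian)
  rw [mcfc, mcfc, this]

open scoped MatrixOrder in
lemma Matrix.PosSemidef.eq_sqrt_of_sq_eq {S P : Matrix ι ι ℂ} (hS : S.PosSemidef)
    (hP : P.PosSemidef) (h : S ^ 2 = P) : S = hP.sqrt := by
  have h1 : CFC.sqrt P = S := CFC.sqrt_unique (by rw [← sq, h]) hS.nonneg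
  have h2 : CFC.sqrt P = hP.sqrt := by
    rw [CFC.sqrt_eq_real_sqrt P hP.nonneg, cfcₙ_eq_cfc, hP.isHermitian.cfc_eq, Matrix.IsHermitian.cfc,
      Unitary.conjStarAlgAut_apply]
    rfl
  rw [← h1, h2]

lemma traceNorm_eq (A : Matrix ι ι ℂ) :
    traceNorm A = ((Matrix.posSemidef_conjTranspose_mul_self A).sqrt.trace).re := rfl

section TN
variable {ι : Type*} [Fintype ι] [DecidableEq ι]

lemma traceNorm_herm {A : Matrix ι ι ℂ} (hA : A.IsHermitian) :
    traceNorm A = ∑ i, |hA.eigenvalues i| := by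
  have hS : (mcfc hA (fun x => |x|)).PosSemidef := mcfc_posSemidef hA (fun x => abs_nonneg x)
  have hsq : (mcfc hA (fun x => |x|)) ^ 2 = Aᴴ * A := by
    calc (mcfc hA (fun x => |x|)) ^ 2 = mcfc hA (fun x => |x|) * mcfc hA (fun x => |x|) := pow_two _
    _ = mcfc hA (id * id) := by
        rw [mcfc_mul]; exact mcfc_congr _ fun x => by simp [abs_mul_abs_self]
    _ = mcfc hA id * mcfc hA id := (mcfc_mul hA id id).symm
    _ = A * A := by rw [mcfc_id]
    _ = Aᴴ * A := by rw [hA.eq]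
  have := hS.eq_sqrt_of_sq_eq (Matrix.posSemidef_conjTranspose_mul_self A) hsq
  rw [traceNorm_eq, ← this, mcfc_trace]
  simp

lemma herm_trace_eq {A : Matrix ι ι ℂ} (hA : A.IsHermitian) :
    A.trace = ((∑ i, hA.eigenvalues i : ℝ) : ℂ) := by
  have h := mcfc_trace hA id
  rw [mcfc_id] at h
  simpa using h

lemma traceNorm_psd {P : Matrix ι ι ℂ} (hP : P.PosSemidef) :
    traceNorm P = P.trace.re := by
  rw [traceNorm_herm hP.isHermitian, herm_trace_eq hP.isHermitian]
  simp only [Complex.ofReal_re]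
  exact Finset.sum_congr rfl fun i _ => abs_of_nonneg (hP.eigenvalues_nonneg i)

lemma traceNorm_pos {A : Matrix ι ι ℂ} (hA : A.IsHermitian) (hne : A ≠ 0) :
    0 < traceNorm A := by
  rw [traceNorm_herm hA]
  rcases lt_or_eq_of_le (Finset.sum_nonneg fun i (_ : i ∈ Finset.univ) => abs_nonneg (hA.eigenvalues i)) with h | h
  · exact h
  · exfalso
    apply hne
    have hall := (Finset.sum_eq_zero_iff_of_nonneg (fun i _ => abs_nonneg (hA.eigenvalues i))).mp h.symm
    have hz : ∀ i, hA.eigenvalues i = 0 := fun i => abs_eq_zero.mp (hall i (Finset.mem_univ i))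
    rw [← mcfc_id hA, mcfc]
    have hd : (diagonal ((↑) ∘ id ∘ hA.eigenvalues) : Matrix ι ι ℂ) = 0 := by
      ext i j; by_cases hij : i = j <;> simp [diagonal, hij, hz]
    rw [hd, Matrix.mul_zero, Matrix.zero_mul]

end TN

section PSDIneq
variable {ι : Type*} [Fintype ι] [DecidableEq ι]

lemma psd_smul_real {c : ℝ} (hc : 0 ≤ c) {M : Matrix ι ι ℂ} (hM : M.PosSemidef) :
    ((c : ℂ) • M).PosSemidef := by
  constructor
  · have : ((c:ℂ) • M)ᴴ = (starRingEnd ℂ) (c:ℂ) • Mᴴ := Matrix.conjTranspose_smul _ _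
    rw [Matrix.IsHermitian, this, Complex.conj_ofReal, hM.1.eq]
  · exact (hM.smul (Complex.zero_le_real.mpr hc)).2

lemma psd_sum {κ : Type*} [Fintype κ] (f : κ → Matrix ι ι ℂ)
    (hf : ∀ k, (f k).PosSemidef) : (∑ k, f k).PosSemidef := by
  classical
  refine Finset.sum_induction f _ (fun a b ha hb => ha.add hb) Matrix.PosSemidef.zero
    (fun k _ => hf k)

lemma psd_mul_trace_re_nonneg {A B : Matrix ι ι ℂ} (hA : A.PosSemidef) (hB : B.PosSemidef) :
    0 ≤ ((A * B).trace).re := by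
  have hS : B = hB.sqrt * hB.sqrt := hB.sqrt_mul_self.symm
  have hherm : (hB.sqrt)ᴴ = hB.sqrt := hB.posSemidef_sqrt.isHermitian.eq
  have : (A * B).trace = ((hB.sqrt)ᴴ * A * hB.sqrt).trace := by
    conv_lhs => rw [hS]
    rw [hherm, ← Matrix.mul_assoc, Matrix.trace_mul_comm, ← Matrix.mul_assoc]
  rw [this]
  have hpsd := hA.conjTranspose_mul_mul_same hB.sqrt
  rw [herm_trace_eq hpsd.isHermitian]
  simp only [Complex.ofReal_re]
  exact Finset.sum_nonneg fun i _ => hpsd.eigenvalues_nonneg i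

/-- positive part -/
noncomputable def pPart {A : Matrix ι ι ℂ} (hA : A.IsHermitian) : Matrix ι ι ℂ :=
  mcfc hA (fun x => max x 0)
noncomputable def nPart {A : Matrix ι ι ℂ} (hA : A.IsHermitian) : Matrix ι ι ℂ :=
  mcfc hA (fun x => max (-x) 0)

lemma pPart_psd {A : Matrix ι ι ℂ} (hA : A.IsHermitian) : (pPart hA).PosSemidef :=
  mcfc_posSemidef hA fun x => le_max_right _ _
lemma nPart_psd {A : Matrix ι ι ℂ} (hA : A.IsHermitian) : (nPart hA).PosSemidef :=
  mcfc_posSemidef hA fun x => le_max_right _ _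
lemma pPart_sub_nPart {A : Matrix ι ι ℂ} (hA : A.IsHermitian) :
    pPart hA - nPart hA = A := by
  calc pPart hA - nPart hA
      = mcfc hA (fun x => max (id x) 0) - mcfc hA (fun x => max (-id x) 0) := rfl
    _ = mcfc hA id := (mcfc_eq_pos_sub_neg hA id).symm
    _ = A := mcfc_id hA
lemma pPart_nPart_trace {A : Matrix ι ι ℂ} (hA : A.IsHermitian) :
    ((pPart hA).trace).re + ((nPart hA).trace).re = traceNorm A := by
  rw [pPart, nPart, mcfc_trace, mcfc_trace, traceNorm_herm hA]
  simp only [Complex.ofReal_re]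
  rw [← Finset.sum_add_distrib]
  exact Finset.sum_congr rfl fun i _ => by
    rcases le_total (hA.eigenvalues i) 0 with h | h
    · rw [max_eq_right h, max_eq_left (neg_nonneg.mpr h), abs_of_nonpos h]; ring
    · rw [max_eq_left h, max_eq_right (neg_nonpos.mpr h), abs_of_nonneg h]; ring

lemma contraction_step {X Q : Matrix ι ι ℂ}
    (hXp : ((1 : Matrix ι ι ℂ) - X).PosSemidef) (hQ : Q.PosSemidef) :
    ((X * Q).trace).re ≤ (Q.trace).re := by
  have h := psd_mul_trace_re_nonneg hXp hQ
  rw [Matrix.sub_mul, Matrix.one_mul, Matrix.trace_sub] at h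
  simp only [Complex.sub_re] at h
  linarith

lemma contraction_herm {X M : Matrix ι ι ℂ}
    (hXp : ((1 : Matrix ι ι ℂ) - X).PosSemidef) (hXm : ((1 : Matrix ι ι ℂ) + X).PosSemidef)
    (hM : M.IsHermitian) : ((X * M).trace).re ≤ traceNorm M := by
  have hdec := pPart_sub_nPart hM
  have h1 : ((X * pPart hM).trace).re ≤ ((pPart hM).trace).re :=
    contraction_step hXp (pPart_psd hM)
  have h2 : -(((X * nPart hM).trace).re) ≤ ((nPart hM).trace).re := by
    have h := psd_mul_trace_re_nonneg hXm (nPart_psd hM)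
    rw [Matrix.add_mul, Matrix.one_mul, Matrix.trace_add] at h
    simp only [Complex.add_re] at h
    linarith
  have hXM : X * M = X * pPart hM - X * nPart hM := by
    rw [← Matrix.mul_sub, hdec]
  rw [hXM, Matrix.trace_sub, ← pPart_nPart_trace hM]
  simp only [Complex.sub_re]
  linarith

end PSDIneq

section CP
variable {ι κ : Type*} [Fintype ι] [DecidableEq ι] [Fintype κ] [DecidableEq κ]

lemma choi_apply_expand (Λ : Matrix ι ι ℂ →ₗ[ℂ] Matrix κ κ ℂ) (ρ : Matrix ι ι ℂ) (a b : κ) :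
    Λ ρ a b = ∑ i, ∑ j, ρ i j * choiMatrix Λ (i, a) (j, b) := by
  conv_lhs => rw [matrix_eq_sum_single ρ]
  rw [map_sum, Matrix.sum_apply]
  refine Finset.sum_congr rfl fun i _ => ?_
  rw [map_sum, Matrix.sum_apply]
  refine Finset.sum_congr rfl fun j _ => ?_
  have h : Matrix.single i j (ρ i j) = ρ i j • Matrix.single i j (1 : ℂ) := by
    rw [Matrix.smul_single, smul_eq_mul, mul_one]
  rw [h, _root_.map_smul, Matrix.smul_apply, choiMatrix, Matrix.of_apply, smul_eq_mul]

lemma cp_psd {Λ : Matrix ι ι ℂ →ₗ[ℂ] Matrix κ κ ℂ} (hJ : (choiMatrix Λ).PosSemidef)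
    {ρ : Matrix ι ι ℂ} (hρ : ρ.PosSemidef) : (Λ ρ).PosSemidef := by
  set B := hJ.sqrt with hBdef
  have hBB : choiMatrix Λ = Bᴴ * B := by
    rw [hJ.posSemidef_sqrt.isHermitian.eq, hJ.sqrt_mul_self]
  have key : Λ ρ = ∑ m : ι × κ, (Matrix.of fun (a : κ) (i : ι) => star (B m (i, a))) * ρ *
      (Matrix.of fun (a : κ) (i : ι) => star (B m (i, a)))ᴴ := by
    ext a b
    rw [choi_apply_expand, Matrix.sum_apply]
    have hJab : ∀ i j, choiMatrix Λ (i, a) (j, b) = ∑ m : ι × κ, star (B m (i, a)) * B m (j, b) := by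
      intro i j
      rw [hBB, Matrix.mul_apply]
      exact Finset.sum_congr rfl fun m _ => by rw [Matrix.conjTranspose_apply]
    calc ∑ i, ∑ j, ρ i j * choiMatrix Λ (i, a) (j, b)
        = ∑ i, ∑ j, ∑ m : ι × κ, ρ i j * (star (B m (i, a)) * B m (j, b)) := by
          refine Finset.sum_congr rfl fun i _ => Finset.sum_congr rfl fun j _ => ?_
          rw [hJab, Finset.mul_sum]
      _ = ∑ i, ∑ m : ι × κ, ∑ j, ρ i j * (star (B m (i, a)) * B m (j, b)) := by
          exact Finset.sum_congr rfl fun i _ => Finset.sum_comm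
      _ = ∑ m : ι × κ, ∑ i, ∑ j, ρ i j * (star (B m (i, a)) * B m (j, b)) := Finset.sum_comm
      _ = ∑ m : ι × κ, ((Matrix.of fun (a : κ) (i : ι) => star (B m (i, a))) * ρ *
            (Matrix.of fun (a : κ) (i : ι) => star (B m (i, a)))ᴴ) a b := by
          refine Finset.sum_congr rfl fun m _ => ?_
          rw [Matrix.mul_apply]
          rw [Finset.sum_comm]
          refine Finset.sum_congr rfl fun j _ => ?_
          rw [Matrix.mul_apply, Matrix.conjTranspose_apply, Matrix.of_apply, star_star,
            Finset.sum_mul]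
          refine Finset.sum_congr rfl fun i _ => ?_
          rw [Matrix.of_apply]
          ring
  rw [key]
  exact psd_sum _ fun m => hρ.mul_mul_conjTranspose_same _

end CP

section Sign
variable {ι : Type*} [Fintype ι] [DecidableEq ι]

lemma mcfc_sub {A : Matrix ι ι ℂ} (hA : A.IsHermitian) (f g : ℝ → ℝ) :
    mcfc hA f - mcfc hA g = mcfc hA (f - g) := by
  rw [sub_eq_iff_eq_add, mcfc_add]
  exact mcfc_congr _ fun x => by simp

noncomputable def sgnM {B : Matrix ι ι ℂ} (hB : B.IsHermitian) : Matrix ι ι ℂ :=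
  mcfc hB (fun x => if 0 ≤ x then 1 else -1)

lemma sgnM_one_sub {B : Matrix ι ι ℂ} (hB : B.IsHermitian) :
    ((1 : Matrix ι ι ℂ) - sgnM hB).PosSemidef := by
  have h1 : (1 : Matrix ι ι ℂ) = mcfc hB (fun _ => 1) := by
    rw [mcfc_const]; simp
  rw [h1, sgnM, mcfc_sub]
  exact mcfc_posSemidef hB fun x => by by_cases h : 0 ≤ x <;> simp [h] <;> norm_num

lemma sgnM_one_add {B : Matrix ι ι ℂ} (hB : B.IsHermitian) :
    ((1 : Matrix ι ι ℂ) + sgnM hB).PosSemidef := by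
  have h1 : (1 : Matrix ι ι ℂ) = mcfc hB (fun _ => 1) := by
    rw [mcfc_const]; simp
  rw [h1, sgnM, mcfc_add]
  exact mcfc_posSemidef hB fun x => by by_cases h : 0 ≤ x <;> simp [h] <;> norm_num

lemma sgnM_mul_trace {B : Matrix ι ι ℂ} (hB : B.IsHermitian) :
    ((sgnM hB * B).trace).re = traceNorm B := by
  have : sgnM hB * B = mcfc hB ((fun x => if 0 ≤ x then 1 else -1) * id) := by
    rw [sgnM, ← mcfc_mul, mcfc_id]
  rw [this, mcfc_trace, traceNorm_herm hB]
  simp only [Complex.ofReal_re]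
  refine Finset.sum_congr rfl fun i _ => ?_
  rcases le_or_gt 0 (hB.eigenvalues i) with h | h
  · simp [Pi.mul_apply, h, abs_of_nonneg h]
  · simp [Pi.mul_apply, not_le.mpr h, abs_of_neg h]

end Sign

section Main
variable {ι κ : Type*} [Fintype ι] [DecidableEq ι] [Fintype κ] [DecidableEq κ]

lemma abs_step {X Q : Matrix κ κ ℂ} (hXp : ((1 : Matrix κ κ ℂ) - X).PosSemidef)
    (hXm : ((1 : Matrix κ κ ℂ) + X).PosSemidef) (hQ : Q.PosSemidef) :
    |((X * Q).trace).re| ≤ (Q.trace).re := by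
  rw [abs_le]
  constructor
  · have h := psd_mul_trace_re_nonneg hXm hQ
    rw [Matrix.add_mul, Matrix.one_mul, Matrix.trace_add] at h
    simp only [Complex.add_re] at h; linarith
  · exact contraction_step hXp hQ

lemma cptp_contr {Λ : Matrix ι ι ℂ →ₗ[ℂ] Matrix κ κ ℂ} (hΛ : IsCPTP Λ)
    {X : Matrix κ κ ℂ} (hXp : ((1 : Matrix κ κ ℂ) - X).PosSemidef)
    (hXm : ((1 : Matrix κ κ ℂ) + X).PosSemidef) {A : Matrix ι ι ℂ} (hA : A.IsHermitian) :
    |((X * Λ A).trace).re| ≤ traceNorm A := by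
  have hdec := pPart_sub_nPart hA
  have hXA : X * Λ A = X * Λ (pPart hA) - X * Λ (nPart hA) := by
    rw [← Matrix.mul_sub, ← map_sub, hdec]
  have h1 := abs_step hXp hXm (cp_psd hΛ.1 (pPart_psd hA))
  have h2 := abs_step hXp hXm (cp_psd hΛ.1 (nPart_psd hA))
  rw [hΛ.2] at h1 h2
  rw [hXA, Matrix.trace_sub, ← pPart_nPart_trace hA]
  simp only [Complex.sub_re]
  calc |((X * Λ (pPart hA)).trace).re - ((X * Λ (nPart hA)).trace).re|
      ≤ |((X * Λ (pPart hA)).trace).re| + |((X * Λ (nPart hA)).trace).re| := abs_sub _ _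
    _ ≤ ((pPart hA).trace).re + ((nPart hA).trace).re := add_le_add h1 h2

lemma exists_sgn {B : Matrix κ κ ℂ} (hB : B.IsHermitian) :
    ∃ X : Matrix κ κ ℂ, ((1 : Matrix κ κ ℂ) - X).PosSemidef ∧
      ((1 : Matrix κ κ ℂ) + X).PosSemidef ∧ ((X * B).trace).re = traceNorm B :=
  ⟨sgnM hB, sgnM_one_sub hB, sgnM_one_add hB, sgnM_mul_trace hB⟩

lemma main_bound {Λp Λm : Matrix ι ι ℂ →ₗ[ℂ] Matrix κ κ ℂ} (hcp : IsCPTP Λp) (hcm : IsCPTP Λm)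
    {lp lm : ℝ} (hlp : 0 ≤ lp) (hlm : 0 ≤ lm) {A : Matrix ι ι ℂ} (hA : A.IsHermitian)
    {B : Matrix κ κ ℂ} (hB : B.IsHermitian)
    (hEq : B = (lp : ℂ) • Λp A - (lm : ℂ) • Λm A) :
    traceNorm B ≤ (lp + lm) * traceNorm A := by
  obtain ⟨X, hXp, hXm, hXtr⟩ := exists_sgn hB
  have hexp : (X * B).trace = (lp : ℂ) * (X * Λp A).trace - (lm : ℂ) * (X * Λm A).trace := by
    simp [hEq, Matrix.mul_sub, Matrix.mul_smul, Matrix.trace_sub, Matrix.trace_smul,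
      smul_eq_mul]
  have hre : traceNorm B = lp * ((X * Λp A).trace).re - lm * ((X * Λm A).trace).re := by
    rw [← hXtr, hexp]
    simp [Complex.sub_re, Complex.re_ofReal_mul]
  have hc1 := cptp_contr hcp hXp hXm hA
  have hc2 := cptp_contr hcm hXp hXm hA
  have e1 : lp * ((X * Λp A).trace).re ≤ lp * traceNorm A :=
    mul_le_mul_of_nonneg_left ((le_abs_self _).trans hc1) hlp
  have e2 : lm * (-((X * Λm A).trace).re) ≤ lm * traceNorm A :=
    mul_le_mul_of_nonneg_left ((neg_le_abs _).trans hc2) hlm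
  rw [hre, add_mul]
  nlinarith [e1, e2]

end Main

section Kron
variable {ι : Type*} [Fintype ι] [DecidableEq ι]

lemma kronPow_conjTranspose (A : Matrix ι ι ℂ) (k : ℕ) : (kronPow A k)ᴴ = kronPow Aᴴ k := by
  ext x y
  rw [Matrix.conjTranspose_apply, kronPow, kronPow, Matrix.of_apply, Matrix.of_apply, star_prod]
  exact Finset.prod_congr rfl fun i _ => rfl

lemma kronPow_isHermitian {A : Matrix ι ι ℂ} (hA : A.IsHermitian) (k : ℕ) :
    (kronPow A k).IsHermitian := by
  rw [Matrix.IsHermitian, kronPow_conjTranspose, hA.eq]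

lemma kronPow_mul (A B : Matrix ι ι ℂ) (k : ℕ) :
    kronPow (A * B) k = kronPow A k * kronPow B k := by
  ext x y
  rw [Matrix.mul_apply]
  simp only [kronPow, Matrix.of_apply, Matrix.mul_apply]
  rw [Fintype.prod_sum]
  exact Finset.sum_congr rfl fun z _ => Finset.prod_mul_distrib

lemma kronPow_psd {ρ : Matrix ι ι ℂ} (hρ : ρ.PosSemidef) (k : ℕ) :
    (kronPow ρ k).PosSemidef := by
  have h : kronPow ρ k = (kronPow hρ.sqrt k)ᴴ * kronPow hρ.sqrt k := by
    rw [kronPow_conjTranspose, hρ.posSemidef_sqrt.isHermitian.eq, ← kronPow_mul,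
      hρ.sqrt_mul_self]
  rw [h]
  exact Matrix.posSemidef_conjTranspose_mul_self _

lemma kronPow_trace (A : Matrix ι ι ℂ) (k : ℕ) : (kronPow A k).trace = A.trace ^ k := by
  have h : (kronPow A k).trace = ∑ x : Fin k → ι, ∏ i, A (x i) (x i) := by
    rw [Matrix.trace]; simp [Matrix.diag, kronPow]
  rw [h, ← Fintype.prod_sum (fun (_ : Fin k) j => A j j)]
  simp [Matrix.trace, Matrix.diag, Finset.prod_const, Finset.card_univ]

end Kron

section Repl
variable {ι κ : Type*} [Fintype ι] [DecidableEq ι] [Fintype κ] [DecidableEq κ]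

lemma ofReal_smul_mat (r : ℝ) (M : Matrix ι κ ℂ) : (r : ℂ) • M = r • M := by
  ext i j; simp [Complex.real_smul]

lemma herm_smul_real {A : Matrix ι ι ℂ} (hA : A.IsHermitian) (r : ℝ) :
    (r • A).IsHermitian := by
  rw [← ofReal_smul_mat, Matrix.IsHermitian, Matrix.conjTranspose_smul]
  simp [Complex.star_def, Complex.conj_ofReal, hA.eq]

lemma psd_trace_re_nonneg {P : Matrix ι ι ℂ} (hP : P.PosSemidef) : 0 ≤ (P.trace).re := by
  rw [← traceNorm_psd hP, traceNorm_herm hP.isHermitian]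
  exact Finset.sum_nonneg fun i _ => abs_nonneg _

/-- replacement-type linear map -/
noncomputable def repl (K : Matrix ι ι ℂ) (σ : Matrix κ κ ℂ) :
    Matrix ι ι ℂ →ₗ[ℂ] Matrix κ κ ℂ where
  toFun A := (K * A).trace • σ
  map_add' A B := by simp [Matrix.mul_add, Matrix.trace_add, add_smul]
  map_smul' c A := by simp [Matrix.mul_smul, smul_smul]

lemma repl_apply (K : Matrix ι ι ℂ) (σ : Matrix κ κ ℂ) (A : Matrix ι ι ℂ) :
    repl K σ A = (K * A).trace • σ := rfl

lemma trace_mul_stdBasisMatrix (K : Matrix ι ι ℂ) (i j : ι) :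
    (K * Matrix.single i j 1).trace = K j i := by
  rw [Matrix.trace]
  simp only [Matrix.diag, Matrix.mul_apply, Matrix.single, Matrix.of_apply,
    mul_ite, mul_one, mul_zero, ite_and]
  rw [Finset.sum_comm]
  simp

lemma choi_repl (K : Matrix ι ι ℂ) (σ : Matrix κ κ ℂ) (p q : ι × κ) :
    choiMatrix (repl K σ) p q = K q.1 p.1 * σ p.2 q.2 := by
  show ((K * Matrix.single p.1 q.1 1).trace • σ) p.2 q.2 = _
  rw [trace_mul_stdBasisMatrix, Matrix.smul_apply, smul_eq_mul]

lemma choi_repl_psd {K : Matrix ι ι ℂ} {σ : Matrix κ κ ℂ}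
    (hK : K.PosSemidef) (hσ : σ.PosSemidef) : (choiMatrix (repl K σ)).PosSemidef := by
  have hKt : Kᵀ.PosSemidef := hK.transpose
  set S := hKt.sqrt with hS
  set T := hσ.sqrt with hT
  have hSS : Kᵀ = Sᴴ * S := by rw [hKt.posSemidef_sqrt.isHermitian.eq, hKt.sqrt_mul_self]
  have hTT : σ = Tᴴ * T := by rw [hσ.posSemidef_sqrt.isHermitian.eq, hσ.sqrt_mul_self]
  have key : choiMatrix (repl K σ) =
      (Matrix.of fun (r p : ι × κ) => S r.1 p.1 * T r.2 p.2)ᴴ *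
      (Matrix.of fun (r p : ι × κ) => S r.1 p.1 * T r.2 p.2) := by
    ext p q
    rw [choi_repl, Matrix.mul_apply]
    have h1 : K q.1 p.1 = Kᵀ p.1 q.1 := rfl
    rw [h1, hSS, hTT, Matrix.mul_apply, Matrix.mul_apply, Finset.sum_mul_sum]
    rw [Fintype.sum_prod_type]
    refine Finset.sum_congr rfl fun r1 _ => Finset.sum_congr rfl fun r2 _ => ?_
    simp only [Matrix.conjTranspose_apply, Matrix.of_apply, star_mul']
    ring
  rw [key]
  exact Matrix.posSemidef_conjTranspose_mul_self _

lemma choiMatrix_add (Λ₁ Λ₂ : Matrix ι ι ℂ →ₗ[ℂ] Matrix κ κ ℂ) :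
    choiMatrix (Λ₁ + Λ₂) = choiMatrix Λ₁ + choiMatrix Λ₂ := by
  ext p q; simp [choiMatrix]

lemma choiMatrix_smul (c : ℂ) (Λ : Matrix ι ι ℂ →ₗ[ℂ] Matrix κ κ ℂ) :
    choiMatrix (c • Λ) = c • choiMatrix Λ := by
  ext p q; simp [choiMatrix]

lemma mcfc_posSemidef' {A : Matrix ι ι ℂ} (hA : A.IsHermitian) {f : ℝ → ℝ}
    (hf : ∀ i, 0 ≤ f (hA.eigenvalues i)) : (mcfc hA f).PosSemidef := by
  rw [mcfc, Matrix.star_eq_conjTranspose]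
  exact (Matrix.PosSemidef.diagonal (fun i => by
    simpa using Complex.zero_le_real.mpr (hf i))).mul_mul_conjTranspose_same _

lemma smul_one_sub_psd {P : Matrix ι ι ℂ} (hP : P.PosSemidef) {r : ℝ}
    (hr : (P.trace).re ≤ r) : ((r : ℂ) • (1 : Matrix ι ι ℂ) - P).PosSemidef := by
  have h1 : (r : ℂ) • (1 : Matrix ι ι ℂ) = mcfc hP.isHermitian (fun _ => r) := by
    rw [mcfc_const, ofReal_smul_mat]
  have h2 : (r : ℂ) • (1 : Matrix ι ι ℂ) - P = mcfc hP.isHermitian ((fun _ => r) - id) := by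
    rw [← mcfc_sub, mcfc_id, ← h1]
  rw [h2]
  refine mcfc_posSemidef' hP.isHermitian fun i => ?_
  have htr : (P.trace).re = ∑ j, hP.isHermitian.eigenvalues j := by
    rw [herm_trace_eq hP.isHermitian]; simp
  have hle : hP.isHermitian.eigenvalues i ≤ ∑ j, hP.isHermitian.eigenvalues j :=
    Finset.single_le_sum (fun j _ => hP.eigenvalues_nonneg j) (Finset.mem_univ i)
  simp only [Pi.sub_apply, id_eq]
  linarith [htr ▸ hle]

lemma herm_mul_trace_real {A B : Matrix ι ι ℂ} (hA : A.IsHermitian) (hB : B.IsHermitian) :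
    (A * B).trace = ((((A * B).trace).re : ℝ) : ℂ) := by
  have h : (starRingEnd ℂ) ((A * B).trace) = (A * B).trace := by
    have h1 : ((A * B)ᴴ).trace = (starRingEnd ℂ) ((A * B).trace) := by
      rw [Matrix.trace_conjTranspose]; rfl
    rw [← h1, Matrix.conjTranspose_mul, hA.eq, hB.eq, Matrix.trace_mul_comm]
  exact ((Complex.conj_eq_iff_re.mp h)).symm

lemma frob_pos {A : Matrix ι ι ℂ} (hA0 : A ≠ 0) : 0 < ((Aᴴ * A).trace).re := by
  have hexp : ((Aᴴ * A).trace).re = ∑ j, ∑ i, Complex.normSq (A i j) := by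
    rw [Matrix.trace]
    simp only [Matrix.diag, Matrix.mul_apply, Matrix.conjTranspose_apply]
    rw [Complex.re_sum]
    refine Finset.sum_congr rfl fun j _ => ?_
    rw [Complex.re_sum]
    refine Finset.sum_congr rfl fun i _ => ?_
    show ((starRingEnd ℂ) (A i j) * A i j).re = Complex.normSq (A i j)
    rw [← Complex.normSq_eq_conj_mul_self]
    simp
  rw [hexp]
  have hne : ∃ i j, A i j ≠ 0 := by
    by_contra h
    push_neg at h
    exact hA0 (by ext i j; simpa using h i j)
  obtain ⟨i0, j0, hij⟩ := hne
  refine Finset.sum_pos' (fun j _ => Finset.sum_nonneg fun i _ => Complex.normSq_nonneg _) ?_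
  exact ⟨j0, Finset.mem_univ j0, Finset.sum_pos' (fun i _ => Complex.normSq_nonneg _)
    ⟨i0, Finset.mem_univ i0, Complex.normSq_pos.mpr hij⟩⟩

end Repl

section Dual
variable {ι : Type*} [Fintype ι] [DecidableEq ι]

lemma density_trace_mul_real {ρ σ : Matrix ι ι ℂ} (hρ : ρ.IsHermitian) (hσ : σ.IsHermitian) :
    (ρ * σ).trace = ((((ρ * σ).trace).re : ℝ) : ℂ) := herm_mul_trace_real hρ hσ

lemma dual_exists {ρ σ : Matrix ι ι ℂ} (hρ : IsDensity ρ) (hσ : IsDensity σ) (hne : ρ ≠ σ) :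
    ∃ H : Matrix ι ι ℂ, H.IsHermitian ∧ (H * ρ).trace = 1 ∧ (H * σ).trace = 0 := by
  have hρh := hρ.1.isHermitian
  have hσh := hσ.1.isHermitian
  have hσ0 : σ ≠ 0 := by
    intro h
    have := hσ.2
    rw [h, Matrix.trace_zero] at this
    exact zero_ne_one this
  set δ : ℝ := ((σ * σ).trace).re with hδdef
  have hδc : (σ * σ).trace = (δ : ℂ) := herm_mul_trace_real hσh hσh
  have hδpos : 0 < δ := by
    have := frob_pos hσ0
    rwa [hσh.eq] at this
  set γ : ℝ := ((σ * ρ).trace).re with hγdef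
  have hγc : (σ * ρ).trace = (γ : ℂ) := herm_mul_trace_real hσh hρh
  set r : ℝ := γ / δ with hrdef
  set v : Matrix ι ι ℂ := ρ - r • σ with hvdef
  have hvh : v.IsHermitian := hρh.sub (herm_smul_real hσh r)
  have hv0 : v ≠ 0 := by
    intro h
    have hρσ : ρ = r • σ := by
      have := sub_eq_zero.mp h; exact this
    have htr : (1 : ℂ) = (r : ℂ) := by
      have h1 := congrArg Matrix.trace hρσ
      rw [hρ.2, Matrix.trace_smul, hσ.2] at h1
      simpa [Complex.real_smul] using h1
    have hr1 : r = 1 := by exact_mod_cast htr.symm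
    exact hne (by rw [hρσ, hr1, one_smul])
  have hvσ : (v * σ).trace = 0 := by
    rw [hvdef, Matrix.sub_mul, Matrix.trace_sub, Matrix.smul_mul, Matrix.trace_smul]
    rw [Matrix.trace_mul_comm ρ σ, hγc, hδc]
    rw [Complex.real_smul, hrdef]
    push_cast
    field_simp
    ring
  set ε : ℝ := ((v * v).trace).re with hεdef
  have hεc : (v * v).trace = (ε : ℂ) := herm_mul_trace_real hvh hvh
  have hεpos : 0 < ε := by
    have := frob_pos hv0
    rwa [hvh.eq] at this
  have hvρ : (v * ρ).trace = (ε : ℂ) := by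
    have hρv : ρ = v + r • σ := by rw [hvdef]; abel
    calc (v * ρ).trace = (v * (v + r • σ)).trace := by rw [← hρv]
      _ = (v * v).trace + r • (v * σ).trace := by
          rw [Matrix.mul_add, Matrix.trace_add, Matrix.mul_smul, Matrix.trace_smul]
      _ = (ε : ℂ) := by rw [hεc, hvσ, smul_zero, add_zero]
  refine ⟨(1 / ε) • v, herm_smul_real hvh _, ?_, ?_⟩
  · rw [Matrix.smul_mul, Matrix.trace_smul, hvρ, Complex.real_smul]
    push_cast
    field_simp
  · rw [Matrix.smul_mul, Matrix.trace_smul, hvσ, smul_zero]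

end Dual

lemma cloneCostSet_nonempty {d : ℕ} (n : ℕ) {ρ₁ ρ₂ : Matrix (Fin d) (Fin d) ℂ}
    (h₁ : IsDensity ρ₁) (h₂ : IsDensity ρ₂) (hne : ρ₁ ≠ ρ₂) :
    (cloneCostSet ![ρ₁, ρ₂] n).Nonempty := by
  obtain ⟨H₁, hH₁, e11, e12⟩ := dual_exists h₁ h₂ hne
  obtain ⟨H₂, hH₂, e22, e21⟩ := dual_exists h₂ h₁ (Ne.symm hne)
  set M : Matrix (Fin d) (Fin d) ℂ := 1 - H₁ - H₂ with hMdef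
  have hM : M.IsHermitian := (Matrix.isHermitian_one.sub hH₁).sub hH₂
  have eM1 : (M * ρ₁).trace = 0 := by
    rw [hMdef, Matrix.sub_mul, Matrix.sub_mul, Matrix.one_mul, Matrix.trace_sub,
      Matrix.trace_sub, h₁.2, e11, e21]
    ring
  have eM2 : (M * ρ₂).trace = 0 := by
    rw [hMdef, Matrix.sub_mul, Matrix.sub_mul, Matrix.one_mul, Matrix.trace_sub,
      Matrix.trace_sub, h₂.2, e12, e22]
    ring
  set P1 := pPart hH₁; set N1 := nPart hH₁
  set P2 := pPart hH₂; set N2 := nPart hH₂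
  set PM := pPart hM; set NM := nPart hM
  set Gp : Matrix (Fin d) (Fin d) ℂ := P1 + P2 + PM with hGpdef
  set Gm : Matrix (Fin d) (Fin d) ℂ := N1 + N2 + NM with hGmdef
  have hGp_psd : Gp.PosSemidef := ((pPart_psd hH₁).add (pPart_psd hH₂)).add (pPart_psd hM)
  have hGm_psd : Gm.PosSemidef := ((nPart_psd hH₁).add (nPart_psd hH₂)).add (nPart_psd hM)
  have hGsub : Gp - Gm = 1 := by
    have h : Gp - Gm = (P1 - N1) + (P2 - N2) + (PM - NM) := by rw [hGpdef, hGmdef]; abel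
    rw [h, pPart_sub_nPart hH₁, pPart_sub_nPart hH₂, pPart_sub_nPart hM, hMdef]
    abel
  set t : ℝ := (Gp.trace).re + (Gm.trace).re + 1 with htdef
  have ht1 : 1 ≤ t := by
    have := psd_trace_re_nonneg hGp_psd
    have := psd_trace_re_nonneg hGm_psd
    simp only [htdef]; linarith
  set lp : ℝ := t + 1 with hlpdef
  set lm : ℝ := t with hlmdef
  have hlp0 : 0 ≤ lp := by linarith
  have hlm0 : 0 ≤ lm := by linarith
  have hlpne : (lp : ℂ) ≠ 0 := by
    simp only [ne_eq, Complex.ofReal_eq_zero]; linarith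
  have hlmne : (lm : ℂ) ≠ 0 := by
    simp only [ne_eq, Complex.ofReal_eq_zero]; linarith
  have htGp : (Gp.trace).re ≤ lp := by
    have := psd_trace_re_nonneg hGm_psd
    simp only [hlpdef, htdef]; linarith
  have htGm : (Gm.trace).re ≤ lm := by
    have := psd_trace_re_nonneg hGp_psd
    simp only [hlmdef, htdef]; linarith
  set K4p : Matrix (Fin d) (Fin d) ℂ := (lp : ℂ) • 1 - Gp with hK4pdef
  set K4m : Matrix (Fin d) (Fin d) ℂ := (lm : ℂ) • 1 - Gm with hK4mdef
  have hK4p_psd : K4p.PosSemidef := smul_one_sub_psd hGp_psd htGp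
  have hK4m_psd : K4m.PosSemidef := smul_one_sub_psd hGm_psd htGm
  set R₁ := kronPow ρ₁ n with hR₁def
  set R₂ := kronPow ρ₂ n with hR₂def
  have hR₁psd : R₁.PosSemidef := kronPow_psd h₁.1 n
  have hR₂psd : R₂.PosSemidef := kronPow_psd h₂.1 n
  have hR₁tr : R₁.trace = 1 := by rw [hR₁def, kronPow_trace, h₁.2, one_pow]
  have hR₂tr : R₂.trace = 1 := by rw [hR₂def, kronPow_trace, h₂.2, one_pow]
  set Φp := repl P1 R₁ + repl P2 R₂ + repl PM R₁ + repl K4p R₁ with hΦpdef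
  set Φm := repl N1 R₁ + repl N2 R₂ + repl NM R₁ + repl K4m R₁ with hΦmdef
  set Λp := (lp⁻¹ : ℂ) • Φp with hΛpdef
  set Λm := (lm⁻¹ : ℂ) • Φm with hΛmdef
  have hΦp_apply : ∀ A, Φp A = (P1 * A).trace • R₁ + (P2 * A).trace • R₂ +
      (PM * A).trace • R₁ + (K4p * A).trace • R₁ := fun A => rfl
  have hΦm_apply : ∀ A, Φm A = (N1 * A).trace • R₁ + (N2 * A).trace • R₂ +
      (NM * A).trace • R₁ + (K4m * A).trace • R₁ := fun A => rfl
  have hΦp_tr : ∀ A, (Φp A).trace = (lp : ℂ) * A.trace := by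
    intro A
    rw [hΦp_apply]
    rw [Matrix.trace_add, Matrix.trace_add, Matrix.trace_add, Matrix.trace_smul,
      Matrix.trace_smul, Matrix.trace_smul, Matrix.trace_smul, hR₁tr, hR₂tr]
    have h4 : (K4p * A).trace = (lp : ℂ) * A.trace - (Gp * A).trace := by
      rw [hK4pdef, Matrix.sub_mul, Matrix.smul_mul, Matrix.one_mul, Matrix.trace_sub,
        Matrix.trace_smul, smul_eq_mul]
    have hG : (Gp * A).trace = (P1 * A).trace + (P2 * A).trace + (PM * A).trace := by
      rw [hGpdef, Matrix.add_mul, Matrix.add_mul, Matrix.trace_add, Matrix.trace_add]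
    rw [h4, hG]
    simp only [smul_eq_mul, mul_one]
    ring
  have hΦm_tr : ∀ A, (Φm A).trace = (lm : ℂ) * A.trace := by
    intro A
    rw [hΦm_apply]
    rw [Matrix.trace_add, Matrix.trace_add, Matrix.trace_add, Matrix.trace_smul,
      Matrix.trace_smul, Matrix.trace_smul, Matrix.trace_smul, hR₁tr, hR₂tr]
    have h4 : (K4m * A).trace = (lm : ℂ) * A.trace - (Gm * A).trace := by
      rw [hK4mdef, Matrix.sub_mul, Matrix.smul_mul, Matrix.one_mul, Matrix.trace_sub,
        Matrix.trace_smul, smul_eq_mul]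
    have hG : (Gm * A).trace = (N1 * A).trace + (N2 * A).trace + (NM * A).trace := by
      rw [hGmdef, Matrix.add_mul, Matrix.add_mul, Matrix.trace_add, Matrix.trace_add]
    rw [h4, hG]
    simp only [smul_eq_mul, mul_one]
    ring
  have hcptp_p : IsCPTP Λp := by
    constructor
    · have hch : choiMatrix Λp = (lp⁻¹ : ℂ) • choiMatrix Φp := by
        rw [hΛpdef, choiMatrix_smul]
      have hΦch : choiMatrix Φp = choiMatrix (repl P1 R₁) + choiMatrix (repl P2 R₂) +
          choiMatrix (repl PM R₁) + choiMatrix (repl K4p R₁) := by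
        rw [hΦpdef, choiMatrix_add, choiMatrix_add, choiMatrix_add]
      rw [hch, hΦch, ← Complex.ofReal_inv]
      exact psd_smul_real (inv_nonneg.mpr hlp0)
        ((((choi_repl_psd (pPart_psd hH₁) hR₁psd).add
          (choi_repl_psd (pPart_psd hH₂) hR₂psd)).add
          (choi_repl_psd (pPart_psd hM) hR₁psd)).add (choi_repl_psd hK4p_psd hR₁psd))
    · intro A
      have : Λp A = (lp⁻¹ : ℂ) • Φp A := rfl
      rw [this, Matrix.trace_smul, hΦp_tr, smul_eq_mul]
      field_simp
  have hcptp_m : IsCPTP Λm := by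
    constructor
    · have hch : choiMatrix Λm = (lm⁻¹ : ℂ) • choiMatrix Φm := by
        rw [hΛmdef, choiMatrix_smul]
      have hΦch : choiMatrix Φm = choiMatrix (repl N1 R₁) + choiMatrix (repl N2 R₂) +
          choiMatrix (repl NM R₁) + choiMatrix (repl K4m R₁) := by
        rw [hΦmdef, choiMatrix_add, choiMatrix_add, choiMatrix_add]
      rw [hch, hΦch, ← Complex.ofReal_inv]
      exact psd_smul_real (inv_nonneg.mpr hlm0)
        ((((choi_repl_psd (nPart_psd hH₁) hR₁psd).add
          (choi_repl_psd (nPart_psd hH₂) hR₂psd)).add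
          (choi_repl_psd (nPart_psd hM) hR₁psd)).add (choi_repl_psd hK4m_psd hR₁psd))
    · intro A
      have : Λm A = (lm⁻¹ : ℂ) • Φm A := rfl
      rw [this, Matrix.trace_smul, hΦm_tr, smul_eq_mul]
      field_simp
  have hdiff : ∀ ρ : Matrix (Fin d) (Fin d) ℂ,
      (lp : ℂ) • Λp ρ - (lm : ℂ) • Λm ρ =
        (H₁ * ρ).trace • R₁ + (H₂ * ρ).trace • R₂ + (M * ρ).trace • R₁ := by
    intro ρ
    have hp : (lp : ℂ) • Λp ρ = Φp ρ := by
      rw [show Λp ρ = (lp⁻¹ : ℂ) • Φp ρ from rfl, smul_smul, mul_inv_cancel₀ hlpne, one_smul]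
    have hm : (lm : ℂ) • Λm ρ = Φm ρ := by
      rw [show Λm ρ = (lm⁻¹ : ℂ) • Φm ρ from rfl, smul_smul, mul_inv_cancel₀ hlmne, one_smul]
    rw [hp, hm, hΦp_apply, hΦm_apply]
    have c1 : (P1 * ρ).trace - (N1 * ρ).trace = (H₁ * ρ).trace := by
      rw [← Matrix.trace_sub, ← Matrix.sub_mul, pPart_sub_nPart]
    have c2 : (P2 * ρ).trace - (N2 * ρ).trace = (H₂ * ρ).trace := by
      rw [← Matrix.trace_sub, ← Matrix.sub_mul, pPart_sub_nPart]
    have cM : (PM * ρ).trace - (NM * ρ).trace = (M * ρ).trace := by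
      rw [← Matrix.trace_sub, ← Matrix.sub_mul, pPart_sub_nPart]
    have c4 : (K4p * ρ).trace = (K4m * ρ).trace := by
      have hzero : K4p - K4m = 0 := by
        have h1 : (lp : ℂ) - (lm : ℂ) = 1 := by
          rw [hlpdef]; push_cast; ring
        calc K4p - K4m = ((lp : ℂ) - (lm : ℂ)) • 1 - (Gp - Gm) := by
              rw [hK4pdef, hK4mdef, sub_smul]; abel
          _ = (1 : ℂ) • 1 - 1 := by rw [h1, hGsub]
          _ = 0 := by simp
      have := sub_eq_zero.mp hzero
      rw [show K4p * ρ = K4m * ρ from by rw [this]]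
    rw [← c1, ← c2, ← cM, c4]
    rw [sub_smul, sub_smul, sub_smul]
    abel
  refine ⟨lp + lm, Λp, Λm, lp, lm, hcptp_p, hcptp_m, hlp0, hlm0, by rw [hlpdef]; ring, ?_, rfl⟩
  intro i
  fin_cases i
  · simp only [Fin.zero_eta, Matrix.cons_val_zero]
    rw [hdiff, e11, e21, eM1]
    simp [hR₁def]
  · simp only [Fin.mk_one, Matrix.cons_val_one, Matrix.head_cons, Matrix.cons_val_zero]
    rw [hdiff, e12, e22, eM2]
    simp [hR₂def]

theorem virtual_cloning_stmt18 {d : ℕ} (n : ℕ) (ρ₁ ρ₂ : Matrix (Fin d) (Fin d) ℂ)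
    (h₁ : IsDensity ρ₁) (h₂ : IsDensity ρ₂) (hne : ρ₁ ≠ ρ₂)
    (p₁ p₂ : ℝ) (hp₁ : 0 ≤ p₁) (hp₂ : 0 ≤ p₂) (hsum : p₁ + p₂ = 1)
    (hpne : p₁ • ρ₁ ≠ p₂ • ρ₂) :
    traceNorm (p₁ • kronPow ρ₁ n - p₂ • kronPow ρ₂ n) / traceNorm (p₁ • ρ₁ - p₂ • ρ₂)
      ≤ sInf (cloneCostSet ![ρ₁, ρ₂] n) := by
  have hh₁ := h₁.1.isHermitian
  have hh₂ := h₂.1.isHermitian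
  have hA : (p₁ • ρ₁ - p₂ • ρ₂).IsHermitian :=
    (herm_smul_real hh₁ p₁).sub (herm_smul_real hh₂ p₂)
  have hA0 : (p₁ • ρ₁ - p₂ • ρ₂) ≠ 0 := sub_ne_zero.mpr hpne
  have hden : 0 < traceNorm (p₁ • ρ₁ - p₂ • ρ₂) := traceNorm_pos hA hA0
  have hB : (p₁ • kronPow ρ₁ n - p₂ • kronPow ρ₂ n).IsHermitian :=
    (herm_smul_real (kronPow_isHermitian hh₁ n) p₁).sub
      (herm_smul_real (kronPow_isHermitian hh₂ n) p₂)
  refine le_csInf (cloneCostSet_nonempty n h₁ h₂ hne) ?_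
  rintro c ⟨Λp, Λm, lp, lm, hcp, hcm, hlp, hlm, hsub1, hmap, rfl⟩
  have hm0 := hmap 0
  have hm1 := hmap 1
  simp only [Matrix.cons_val_zero, Matrix.cons_val_one, Matrix.head_cons] at hm0 hm1
  have hEq : (p₁ • kronPow ρ₁ n - p₂ • kronPow ρ₂ n) =
      (lp : ℂ) • Λp (p₁ • ρ₁ - p₂ • ρ₂) - (lm : ℂ) • Λm (p₁ • ρ₁ - p₂ • ρ₂) := by
    have hΛpA : Λp (p₁ • ρ₁ - p₂ • ρ₂) = (p₁ : ℂ) • Λp ρ₁ - (p₂ : ℂ) • Λp ρ₂ := by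
      rw [← ofReal_smul_mat, ← ofReal_smul_mat, map_sub, _root_.map_smul, _root_.map_smul]
    have hΛmA : Λm (p₁ • ρ₁ - p₂ • ρ₂) = (p₁ : ℂ) • Λm ρ₁ - (p₂ : ℂ) • Λm ρ₂ := by
      rw [← ofReal_smul_mat, ← ofReal_smul_mat, map_sub, _root_.map_smul, _root_.map_smul]
    rw [hΛpA, hΛmA, ← ofReal_smul_mat p₁, ← ofReal_smul_mat p₂, ← hm0, ← hm1]
    module
  have hmain := main_bound hcp hcm hlp hlm hA hB hEq
  rw [div_le_iff₀ hden]
  exact hmain
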